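/- Let x, y₁, y₁′, y₂ be real numbers with y₂ < 0 < y₁ ≤ y₁′ and x > √(y₁′ · (−y₂)). Then TP₁(x, y₁′, y₂) ≤ TP₁(x, y₁, y₂), with strict inequality whenever y₁ < y₁′. -/
import Mathlib


/-- `TP₁(x, y₁, y₂) = √((x² + y₁²)(x² + y₂²)) / (2x) − (y₁ − y₂)/2`. -/
noncomputable def TP1 (x y₁ y₂ : ℝ) : ℝ :=
  Real.sqrt ((x ^ 2 + y₁ ^ 2) * (x ^ 2 + y₂ ^ 2)) / (2 * x) - (y₁ - y₂) / 2

lemma stmt6_core (x y₁ y₁' y₂ : ℝ) (hy₂ : y₂ < 0) (hy₁ : 0 < y₁) (hlt : y₁ < y₁')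
    (hx0 : 0 < x) (hx2 : y₁' * (-y₂) < x ^ 2) :
    TP1 x y₁' y₂ < TP1 x y₁ y₂ := by
  set A := x ^ 2 + y₂ ^ 2 with hA
  have hApos : 0 < A := by positivity
  set s := Real.sqrt ((x ^ 2 + y₁' ^ 2) * A) with hsdef
  set t := Real.sqrt ((x ^ 2 + y₁ ^ 2) * A) with htdef
  have hs0 : 0 ≤ s := Real.sqrt_nonneg _
  have ht0 : 0 ≤ t := Real.sqrt_nonneg _
  have hs2 : s ^ 2 = (x ^ 2 + y₁' ^ 2) * A := Real.sq_sqrt (by positivity)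
  have ht2 : t ^ 2 = (x ^ 2 + y₁ ^ 2) * A := Real.sq_sqrt (by positivity)
  clear_value A s t
  -- key: x*t > y₁*A and x*s > y₁'*A
  have hy1' : 0 < y₁' := hy₁.trans hlt
  have hkey : ∀ y u : ℝ, 0 < y → y * (-y₂) < x ^ 2 → 0 ≤ u →
      u ^ 2 = (x ^ 2 + y ^ 2) * A → y * A < x * u := by
    intro y u hy hyx hu hu2
    have hny : 0 ≤ y * (-y₂) := mul_nonneg hy.le (by linarith)
    have h4 : y ^ 2 * y₂ ^ 2 < (x ^ 2) ^ 2 := by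
      have := mul_lt_mul'' hyx hyx hny hny
      nlinarith [this]
    have h1 : (y * A) ^ 2 < (x * u) ^ 2 := by
      have he : (x * u) ^ 2 = x ^ 2 * ((x ^ 2 + y ^ 2) * A) := by rw [mul_pow, hu2]
      rw [he]
      nlinarith [mul_pos hApos (sub_pos.mpr h4)]
    nlinarith [mul_nonneg hx0.le hu, mul_pos hy hApos]
  have h1 : y₁ * A < x * t := hkey y₁ t hy₁ (by nlinarith) ht0 ht2
  have h2 : y₁' * A < x * s := hkey y₁' s hy1' hx2 hs0 hs2
  -- conclude s - t < x * (y₁' - y₁)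
  have hst : s - t < x * (y₁' - y₁) := by
    have htp : 0 < t := by nlinarith [mul_pos hy₁ hApos]
    have hsum : 0 < s + t := by linarith
    have hprod : (s - t) * (s + t) = (y₁' ^ 2 - y₁ ^ 2) * A := by
      linear_combination hs2 - ht2
    have hsum2 : (y₁ + y₁') * A < x * (s + t) := by nlinarith [h1, h2]
    have hmul := mul_lt_mul_of_pos_left hsum2 (show (0:ℝ) < y₁' - y₁ by linarith)
    have hlt2 : (s - t) * (s + t) < x * (y₁' - y₁) * (s + t) := by
      rw [hprod]; linarith [hmul, (by ring : (y₁' - y₁) * ((y₁ + y₁') * A) = (y₁' ^ 2 - y₁ ^ 2) * A), (by ring : (y₁' - y₁) * (x * (s + t)) = x * (y₁' - y₁) * (s + t))]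
    by_contra hcon
    push_neg at hcon
    have := mul_le_mul_of_nonneg_right hcon hsum.le
    linarith
  unfold TP1
  rw [← hA, ← hsdef, ← htdef]
  have h2x : 0 < 2 * x := by linarith
  have h3 : (s - t) / (2 * x) < (x * (y₁' - y₁)) / (2 * x) := by gcongr
  have h4 : (x * (y₁' - y₁)) / (2 * x) = (y₁' - y₁) / 2 := by
    rw [div_eq_div_iff (by positivity) (by positivity)]
    ring
  have h5 : (s - t) / (2 * x) = s / (2 * x) - t / (2 * x) := by ring
  linarith

/-- If `y₂ < 0 < y₁ ≤ y₁′` and `x > √(y₁′·(−y₂))`, then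
`TP₁(x, y₁′, y₂) ≤ TP₁(x, y₁, y₂)`, strictly whenever `y₁ < y₁′`. -/
theorem stmt6 (x y₁ y₁' y₂ : ℝ) (hy₂ : y₂ < 0) (hy₁ : 0 < y₁) (hle : y₁ ≤ y₁')
    (hx : Real.sqrt (y₁' * (-y₂)) < x) :
    TP1 x y₁' y₂ ≤ TP1 x y₁ y₂ ∧ (y₁ < y₁' → TP1 x y₁' y₂ < TP1 x y₁ y₂) := by
  have hx0 : 0 < x := lt_of_le_of_lt (Real.sqrt_nonneg _) hx
  have hx2 : y₁' * (-y₂) < x ^ 2 := by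
    have hnn : 0 ≤ y₁' * (-y₂) := by
      have : 0 < y₁' := hy₁.trans_le hle
      nlinarith
    nlinarith [Real.sq_sqrt hnn, Real.sqrt_nonneg (y₁' * (-y₂)), hx]
  constructor
  · rcases hle.lt_or_eq with h | h
    · exact (stmt6_core x y₁ y₁' y₂ hy₂ hy₁ h hx0 hx2).le
    · rw [h]
  · intro hlt
    exact stmt6_core x y₁ y₁' y₂ hy₂ hy₁ hlt hx0 hx2
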